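/- Let t ≥ 3 be a natural number and let G be a finite simple diamond-free graph. Let S be an independent set of G such that G ⊕ S is diamond-free and K_{1,t}-free, and let r be the center of an induced K_{1,t} of G. Then S ⊆ N(r), i.e., every vertex of S is a neighbor of r in G. -/

import Mathlib

/-- Subgraph complementation: `scompl G S` complements the subgraph of `G` induced by `S`. -/
def scompl {V : Type*} (G : SimpleGraph V) (S : Set V) : SimpleGraph V where
  Adj x y := x ≠ y ∧ ((x ∈ S ∧ y ∈ S ∧ ¬ G.Adj x y) ∨ (¬(x ∈ S ∧ y ∈ S) ∧ G.Adj x y))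
  symm := by
    refine ⟨?_⟩
    rintro x y ⟨hxy, h⟩
    refine ⟨hxy.symm, ?_⟩
    rcases h with ⟨hx, hy, h⟩ | ⟨h, hadj⟩
    · exact Or.inl ⟨hy, hx, fun h' => h (G.adj_symm h')⟩
    · exact Or.inr ⟨fun hc => h ⟨hc.2, hc.1⟩, G.adj_symm hadj⟩
  loopless := ⟨fun x h => h.1 rfl⟩

/-- Degree of a vertex in a finite simple graph. -/
noncomputable def deg {V : Type*} [Fintype V] (G : SimpleGraph V) (v : V) : ℕ :=
  (G.neighborSet v).ncard

/-- `a, b, c, d` form an induced diamond with `a`, `b` its degree-2 vertices. -/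
def IsDiamond {V : Type*} (G : SimpleGraph V) (a b c d : V) : Prop :=
  a ≠ b ∧ a ≠ c ∧ a ≠ d ∧ b ≠ c ∧ b ≠ d ∧ c ≠ d ∧
  G.Adj a c ∧ G.Adj a d ∧ G.Adj b c ∧ G.Adj b d ∧ G.Adj c d ∧ ¬ G.Adj a b

def DiamondFree {V : Type*} (G : SimpleGraph V) : Prop :=
  ∀ a b c d : V, ¬ IsDiamond G a b c d

/-- `r` together with the `t` distinct leaves `f 0, …, f (t-1)` forms an induced `K_{1,t}`
with center `r`. -/
def IsStar {V : Type*} (G : SimpleGraph V) (t : ℕ) (r : V) (f : Fin t → V) : Prop :=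
  Function.Injective f ∧ (∀ i, G.Adj r (f i)) ∧ ∀ i j, i ≠ j → ¬ G.Adj (f i) (f j)

def StarFree {V : Type*} (G : SimpleGraph V) (t : ℕ) : Prop :=
  ∀ (r : V) (f : Fin t → V), ¬ IsStar G t r f


/-!
If at most one leaf of the star lay in `S`, the star would survive in `G ⊕ S`: the centre is
adjacent to every leaf, so it never lies in `S` together with one, and `S` is independent. Hence
two leaves `a, b` lie in `S`, and then the centre `r` does not. A vertex `s ∈ S` not adjacent to
`r` would be joined in `G ⊕ S` to `a` and `b`, which become adjacent there, while `r a`, `r b`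
stay edges and `r s` stays a non-edge: `r, s, a, b` is an induced diamond of `G ⊕ S`.
-/

section

variable {V : Type*} {G : SimpleGraph V} {S : Set V} {x y : V}

theorem scompl_adj_iff_of_not_both_mem (h : ¬(x ∈ S ∧ y ∈ S)) :
    (scompl G S).Adj x y ↔ G.Adj x y :=
  ⟨fun ⟨_, hxy⟩ => hxy.elim (fun hS => absurd ⟨hS.1, hS.2.1⟩ h) And.right,
    fun hxy => ⟨hxy.ne, Or.inr ⟨h, hxy⟩⟩⟩

theorem scompl_adj_of_mem (hx : x ∈ S) (hy : y ∈ S) (hne : x ≠ y) (hxy : ¬G.Adj x y) :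
    (scompl G S).Adj x y :=
  ⟨hne, Or.inl ⟨hx, hy, hxy⟩⟩

theorem scompl_adj_of_notMem_left (hx : x ∉ S) (hxy : G.Adj x y) : (scompl G S).Adj x y :=
  (scompl_adj_iff_of_not_both_mem fun h => hx h.1).2 hxy

theorem not_both_mem_of_adj (hind : ∀ x ∈ S, ∀ y ∈ S, ¬G.Adj x y) (hxy : G.Adj x y) :
    ¬(x ∈ S ∧ y ∈ S) :=
  fun ⟨hx, hy⟩ => hind x hx y hy hxy

theorem IsStar.exists_two_leaves_mem {t : ℕ} {r : V} {f : Fin t → V}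
    (hstar : IsStar G t r f) (hind : ∀ x ∈ S, ∀ y ∈ S, ¬G.Adj x y)
    (hsf : StarFree (scompl G S) t) : ∃ i j, i ≠ j ∧ f i ∈ S ∧ f j ∈ S := by
  obtain ⟨hinj, hadj, hnon⟩ := hstar
  by_contra! hleaves
  refine hsf r f ⟨hinj, fun i => ?_, fun i j hij hfij => ?_⟩
  · exact (scompl_adj_iff_of_not_both_mem (not_both_mem_of_adj hind (hadj i))).2 (hadj i)
  · by_cases hfi : f i ∈ S
    · exact hleaves i j hij hfi (by_contra fun hfj => hnon i j hij
        ((scompl_adj_iff_of_not_both_mem fun h => hfj h.2).1 hfij))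
    · exact hnon i j hij ((scompl_adj_iff_of_not_both_mem fun h => hfi h.1).1 hfij)

theorem isDiamond_scompl_of_not_adj {r s a b : V} (hind : ∀ x ∈ S, ∀ y ∈ S, ¬G.Adj x y)
    (hr : r ∉ S) (hs : s ∈ S) (ha : a ∈ S) (hb : b ∈ S) (hab : a ≠ b)
    (hra : G.Adj r a) (hrb : G.Adj r b) (hrs : ¬G.Adj r s) :
    IsDiamond (scompl G S) r s a b := by
  have hsa : s ≠ a := fun e => hrs (e ▸ hra)
  have hsb : s ≠ b := fun e => hrs (e ▸ hrb)
  refine ⟨fun e => hr (e ▸ hs), hra.ne, hrb.ne, hsa, hsb, hab,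
    scompl_adj_of_notMem_left hr hra, scompl_adj_of_notMem_left hr hrb,
    scompl_adj_of_mem hs ha hsa (hind s hs a ha), scompl_adj_of_mem hs hb hsb (hind s hs b hb),
    scompl_adj_of_mem ha hb hab (hind a ha b hb), ?_⟩
  rwa [scompl_adj_iff_of_not_both_mem fun h => hr h.1]

end

theorem stmt11_general {V : Type*} (t : ℕ) (G : SimpleGraph V)
    (S : Set V) (hind : ∀ x ∈ S, ∀ y ∈ S, ¬ G.Adj x y)
    (hdf : DiamondFree (scompl G S)) (hsf : StarFree (scompl G S) t)
    (r : V) (f : Fin t → V) (hstar : IsStar G t r f) :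
    ∀ s ∈ S, G.Adj r s := by
  intro s hs
  by_contra hrs
  obtain ⟨i, j, hij, hfi, hfj⟩ := hstar.exists_two_leaves_mem hind hsf
  have hr : r ∉ S := fun hr => hind r hr (f i) hfi (hstar.2.1 i)
  exact hdf r s (f i) (f j) <| isDiamond_scompl_of_not_adj hind hr hs hfi hfj
    (fun e => hij (hstar.1 e)) (hstar.2.1 i) (hstar.2.1 j) hrs

theorem stmt11 {V : Type*} [Fintype V] (t : ℕ) (ht : 3 ≤ t) (G : SimpleGraph V)
    (hGdf : DiamondFree G)
    (S : Set V) (hind : ∀ x ∈ S, ∀ y ∈ S, ¬ G.Adj x y)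
    (hdf : DiamondFree (scompl G S)) (hsf : StarFree (scompl G S) t)
    (r : V) (f : Fin t → V) (hstar : IsStar G t r f) :
    ∀ s ∈ S, G.Adj r s :=
  stmt11_general t G S hind hdf hsf r f hstar
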